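/- Let A and B be unital C*-algebras, P₁ a nontrivial projection in A, P₂ = 1 - P₁, η a nonzero complex number with |η| ≠ 1, and Φ : A → B a bijective unital map with Φ(0) = 0 preserving the Jordan η*-product for P ∈ {P₁, P₂} and satisfying Φ(X •_η 1) = Φ(X) •_η Φ(1) for all X. Then Φ(X·P_i) = Φ(X)·Φ(P_i) for all X ∈ A and i = 1, 2. -/

import Mathlib

/-!
For self-adjoint `P` one has `(X P) •_η 1 = X •_η P`, so preservation of both products gives
`Φ(XP) + η Φ(XP)* = Φ(X) Φ(P) + η Φ(P) Φ(X)*`. Comparing `P •_η 1` with `1 •_η P` yields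
`η Φ(P)* = η Φ(P)`, so the right-hand side is `T + η T*` for `T = Φ(X) Φ(P)`, and
`T ↦ T + η T*` is injective because `|η| ≠ 1`.
-/

variable {A B : Type*}
  [NormedRing A] [StarRing A] [CStarRing A] [NormedAlgebra ℂ A] [StarModule ℂ A] [CompleteSpace A]
  [NormedRing B] [StarRing B] [CStarRing B] [NormedAlgebra ℂ B] [StarModule ℂ B] [CompleteSpace B]

def jordanStarProd {R : Type*} [Mul R] [Add R] [Star R] [SMul ℂ R] (η : ℂ) (X Y : R) : R :=
  X * Y + η • (Y * star X)

section JordanStarProd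

variable {R : Type*} [Ring R] [StarRing R] [SMul ℂ R]

theorem jordanStarProd_one_right (η : ℂ) (X : R) : jordanStarProd η X 1 = X + η • star X := by
  simp only [jordanStarProd, mul_one, one_mul]

theorem jordanStarProd_one_left (η : ℂ) (X : R) : jordanStarProd η 1 X = X + η • X := by
  simp only [jordanStarProd, one_mul, star_one, mul_one]

theorem jordanStarProd_mul_one {P : R} (hP : IsSelfAdjoint P) (η : ℂ) (X : R) :
    jordanStarProd η (X * P) 1 = jordanStarProd η X P := by
  rw [jordanStarProd_one_right, star_mul, hP.star_eq, jordanStarProd]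

end JordanStarProd

theorem add_smul_star_injective {M : Type*} [AddCommGroup M] [StarAddMonoid M] [Module ℂ M]
    [StarModule ℂ M] {η : ℂ} (hη : ‖η‖ ≠ 1) : Function.Injective fun T : M ↦ T + η • star T := by
  intro T S h
  set D := T - S
  have hD : D + η • star D = 0 := by
    simp only [D, star_sub, smul_sub]
    linear_combination (norm := module) h
  have hstarD : star D + star η • D = 0 := by
    simpa only [star_add, star_smul, star_star, star_zero] using congrArg star hD
  have hnormSq : (1 - Complex.normSq η : ℂ) • D = 0 := by
    rw [← Complex.mul_conj, ← Complex.star_def]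
    linear_combination (norm := module) hD - η • hstarD
  have hne : (1 - Complex.normSq η : ℂ) ≠ 0 := by
    rw [sub_ne_zero, ne_comm, Complex.normSq_eq_norm_sq]
    exact_mod_cast (pow_eq_one_iff_of_nonneg (norm_nonneg η) two_ne_zero).not.mpr hη
  exact sub_eq_zero.mp ((smul_eq_zero.mp hnormSq).resolve_left hne)

section MapJordanStarProd

variable {R S : Type*} [Ring R] [StarRing R] [SMul ℂ R]
  [Ring S] [StarRing S] [Algebra ℂ S]
  {η : ℂ} {Φ : R → S} {P : R}

theorem smul_star_map_eq_smul_map (hP : IsSelfAdjoint P) (h1 : Φ 1 = 1)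
    (hPη1 : Φ (jordanStarProd η P 1) = jordanStarProd η (Φ P) (Φ 1))
    (h1ηP : Φ (jordanStarProd η 1 P) = jordanStarProd η (Φ 1) (Φ P)) :
    η • star (Φ P) = η • Φ P := by
  have hsame : jordanStarProd η P 1 = jordanStarProd η 1 P := by
    rw [jordanStarProd_one_right, jordanStarProd_one_left, hP.star_eq]
  have h := hPη1.symm.trans (hsame ▸ h1ηP)
  rwa [h1, jordanStarProd_one_right, jordanStarProd_one_left, add_right_inj] at h

theorem map_mul_of_map_jordanStarProd [StarModule ℂ S] (hη : ‖η‖ ≠ 1) (hP : IsSelfAdjoint P)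
    (h1 : Φ 1 = 1)
    (hΦ1 : ∀ X, Φ (jordanStarProd η X 1) = jordanStarProd η (Φ X) (Φ 1))
    (hΦP : ∀ X, Φ (jordanStarProd η X P) = jordanStarProd η (Φ X) (Φ P)) (X : R) :
    Φ (X * P) = Φ X * Φ P := by
  have hstarP := smul_star_map_eq_smul_map hP h1 (hΦ1 P) (hΦP 1)
  apply add_smul_star_injective hη
  calc Φ (X * P) + η • star (Φ (X * P))
      = Φ (jordanStarProd η X P) := by
        rw [← jordanStarProd_mul_one hP, hΦ1, h1, jordanStarProd_one_right]
    _ = Φ X * Φ P + η • (Φ P * star (Φ X)) := hΦP X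
    _ = Φ X * Φ P + η • star (Φ X * Φ P) := by
        rw [star_mul, ← smul_mul_assoc, ← smul_mul_assoc, hstarP]

end MapJordanStarProd

theorem stmt13_general (η : ℂ) (hη1 : ‖η‖ ≠ 1) (P₁ : A)
    (hP : star P₁ = P₁)
    (Φ : A → B)
    (hΦ : ∀ X : A, ∀ P ∈ ({P₁, 1 - P₁} : Set A),
      Φ (X * P + η • (P * star X)) = Φ X * Φ P + η • (Φ P * star (Φ X)))
    (hunital : Φ 1 = 1)
    (hΦ1 : ∀ X : A, Φ (X * 1 + η • (1 * star X)) = Φ X * Φ 1 + η • (Φ 1 * star (Φ X))) :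
    ∀ X : A, ∀ P ∈ ({P₁, 1 - P₁} : Set A), Φ (X * P) = Φ X * Φ P := by
  intro X P hPmem
  have hPsa : IsSelfAdjoint P := by
    rcases hPmem with rfl | rfl
    · exact hP
    · exact (IsSelfAdjoint.one A).sub hP
  exact map_mul_of_map_jordanStarProd hη1 hPsa hunital hΦ1 (fun Y ↦ hΦ Y P hPmem) X

theorem stmt13 (η : ℂ) (hη : η ≠ 0) (hη1 : ‖η‖ ≠ 1) (P₁ : A)
    (hP : star P₁ = P₁) (hP2 : P₁ * P₁ = P₁) (hP0 : P₁ ≠ 0) (hP1 : P₁ ≠ 1)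
    (Φ : A → B) (hbij : Function.Bijective Φ) (h0 : Φ 0 = 0)
    (hΦ : ∀ X : A, ∀ P ∈ ({P₁, 1 - P₁} : Set A),
      Φ (X * P + η • (P * star X)) = Φ X * Φ P + η • (Φ P * star (Φ X)))
    (hunital : Φ 1 = 1)
    (hΦ1 : ∀ X : A, Φ (X * 1 + η • (1 * star X)) = Φ X * Φ 1 + η • (Φ 1 * star (Φ X))) :
    ∀ X : A, ∀ P ∈ ({P₁, 1 - P₁} : Set A), Φ (X * P) = Φ X * Φ P :=
  stmt13_general η hη1 P₁ hP Φ hΦ hunital hΦ1
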